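/- Let n ≥ 2, let A = (a_{ij}) be a symmetric positive-definite real n×n matrix, let β be a linear form on ℝⁿ, and let t be a symmetric bilinear form on ℝⁿ. Suppose there exist a linear form f on ℝⁿ and a constant γ ∈ ℝ such that t(y,y) = (f(y) + γ·α(y))·(α(y) − β(y)) for all y ∈ ℝⁿ. Then t(y,y) = γ·(α(y)² − β(y)²) for all y (and f = γβ). -/

import Mathlib

/-!
Replacing `y` by `-y` leaves `t(y,y)` and `α(y)` unchanged and flips the signs of `f(y)` and
`β(y)`; subtracting the two factorizations gives `2 α(y) (f(y) - γ β(y)) = 0`. Since `α > 0` off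
the origin, `f = γβ`, and then the factorization reads `t(y,y) = γ(α + β)(α - β)`.
-/

open scoped BigOperators

noncomputable section

def alphaOf {n : ℕ} (A : Matrix (Fin n) (Fin n) ℝ) (y : Fin n → ℝ) : ℝ :=
  Real.sqrt (∑ i, ∑ j, A i j * y i * y j)

lemma alphaOf_neg {n : ℕ} (A : Matrix (Fin n) (Fin n) ℝ) (y : Fin n → ℝ) :
    alphaOf A (-y) = alphaOf A y := by
  simp [alphaOf]

lemma alphaOf_pos {n : ℕ} {A : Matrix (Fin n) (Fin n) ℝ} (hA : A.PosDef) {y : Fin n → ℝ}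
    (hy : y ≠ 0) : 0 < alphaOf A y := by
  have hquad : 0 < y ⬝ᵥ A.mulVec y := by simpa using hA.dotProduct_mulVec_pos hy
  refine Real.sqrt_pos.mpr (hquad.trans_eq ?_)
  simp only [dotProduct, Matrix.mulVec]
  refine Finset.sum_congr rfl fun i _ => ?_
  rw [Finset.mul_sum]
  exact Finset.sum_congr rfl fun j _ => by ring

lemma eq_mul_of_factorizations {Q F B a γ : ℝ} (ha : a ≠ 0)
    (hplus : Q = (F + γ * a) * (a - B)) (hminus : Q = (-F + γ * a) * (a + B)) : F = γ * B := by
  have hprod : a * (F - γ * B) = 0 := by linear_combination (hminus - hplus) / 2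
  linarith [(mul_eq_zero.mp hprod).resolve_left ha]

lemma sum_mul_eq_of_factorization {n : ℕ} {A : Matrix (Fin n) (Fin n) ℝ} (hA : A.PosDef)
    {t : Matrix (Fin n) (Fin n) ℝ} {f b : Fin n → ℝ} {γ : ℝ}
    (h : ∀ y : Fin n → ℝ,
      (∑ i, ∑ j, t i j * y i * y j) =
        ((∑ i, f i * y i) + γ * alphaOf A y) * (alphaOf A y - ∑ i, b i * y i))
    (y : Fin n → ℝ) : (∑ i, f i * y i) = γ * ∑ i, b i * y i := by
  rcases eq_or_ne y 0 with rfl | hy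
  · simp
  refine eq_mul_of_factorizations (alphaOf_pos hA hy).ne' (h y) ?_
  simpa [alphaOf_neg, Finset.sum_neg_distrib, sub_neg_eq_add] using h (-y)

theorem stmt_5_general {n : ℕ} (A : Matrix (Fin n) (Fin n) ℝ)
    (hpos : A.PosDef)
    (b : Fin n → ℝ) (t : Matrix (Fin n) (Fin n) ℝ)
    (f : Fin n → ℝ) (γ : ℝ)
    (h : ∀ y : Fin n → ℝ,
      (∑ i, ∑ j, t i j * y i * y j) =
        ((∑ i, f i * y i) + γ * alphaOf A y) * (alphaOf A y - ∑ i, b i * y i)) :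
    (∀ y : Fin n → ℝ,
      (∑ i, ∑ j, t i j * y i * y j) = γ * ((alphaOf A y)^2 - (∑ i, b i * y i)^2)) ∧
    (∀ i, f i = γ * b i) := by
  have hlin := sum_mul_eq_of_factorization hpos h
  refine ⟨fun y => ?_, fun i => by simpa [Pi.single_apply] using hlin (Pi.single i 1)⟩
  linear_combination h y + (alphaOf A y - ∑ i, b i * y i) * hlin y

/-- Lemma 3.4: if `t₀₀ = (f + γα)(α − β)` identically in `y`
(the meaning of `t₀₀ ≡ 0 mod (1−s)`), then `t₀₀ = γ(α² − β²)` and `f = γβ`. -/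
theorem stmt_5 {n : ℕ} (hn : 2 ≤ n) (A : Matrix (Fin n) (Fin n) ℝ)
    (hsym : A.IsSymm) (hpos : A.PosDef)
    (b : Fin n → ℝ) (t : Matrix (Fin n) (Fin n) ℝ) (ht : t.IsSymm)
    (f : Fin n → ℝ) (γ : ℝ)
    (h : ∀ y : Fin n → ℝ,
      (∑ i, ∑ j, t i j * y i * y j) =
        ((∑ i, f i * y i) + γ * alphaOf A y) * (alphaOf A y - ∑ i, b i * y i)) :
    (∀ y : Fin n → ℝ,
      (∑ i, ∑ j, t i j * y i * y j) = γ * ((alphaOf A y)^2 - (∑ i, b i * y i)^2)) ∧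
    (∀ i, f i = γ * b i) :=
  stmt_5_general A hpos b t f γ h
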